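/- Let S be a set of SL_2 rules containing the rules Const(x) ⇐ x ↦ (0,1,γ1,…,γN) * a(0) * a(1) * a(γ1) * … * a(γN) and a(x) ⇐ x ↦ (nil,nil) (with the (N+2)-tuple encoded as a right-nested binary record), where 0,1,γ1,…,γN are free variables. Then in every structure (s,h) with (s,h) ⊨_S Const(x), the locations s(0), s(1), s(γ1), …, s(γN) are pairwise distinct and all belong to dom(h); in particular the restriction of s to {0,1,γ1,…,γN} is injective. -/
import Mathlib

namespace SLPaper

/-- Terms of separation logic: variables or the constant `nil`. -/
inductive SLTerm (V : Type) where
  | var : V → SLTerm V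
  | nil : SLTerm V
deriving DecidableEq

/-- Formulae of `SL_κ`: points-to atoms, predicate atoms, equalities,
disequalities, separating conjunctions and existential quantifications. -/
inductive SLForm (κ : ℕ) (V : Type) (P : Type) where
  | pts   : SLTerm V → (Fin κ → SLTerm V) → SLForm κ V P
  | pred  : P → List (SLTerm V) → SLForm κ V P
  | eq    : SLTerm V → SLTerm V → SLForm κ V P
  | neq   : SLTerm V → SLTerm V → SLForm κ V P
  | star  : SLForm κ V P → SLForm κ V P → SLForm κ V P
  | ex    : V → SLForm κ V P → SLForm κ V P

variable {κ : ℕ} {V P Loc : Type}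

/-- Interpretation of a term in a store. -/
def SLTerm.interp (nilL : Loc) (s : V → Loc) : SLTerm V → Loc
  | .var x => s x
  | .nil => nilL

/-- A heap: a finite partial map from locations to `κ`-tuples of locations,
with `nil` not allocated. -/
structure SLHeap (κ : ℕ) (Loc : Type) (nilL : Loc) where
  f : Loc → Option (Fin κ → Loc)
  finite : {l | f l ≠ none}.Finite
  nil_not_dom : f nilL = none

def SLHeap.dom {nilL : Loc} (h : SLHeap κ Loc nilL) : Set Loc := {l | h.f l ≠ none}

/-- `HUnion h h1 h2` holds iff `h` is the disjoint union of `h1` and `h2`. -/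
def HUnion {nilL : Loc} (h h1 h2 : SLHeap κ Loc nilL) : Prop :=
  h1.dom ∩ h2.dom = ∅ ∧ ∀ l, h.f l = (h1.f l).orElse (fun _ => h2.f l)

/-- Satisfaction of predicate-free formulae (predicate atoms are never satisfied). -/
def Sat [DecidableEq V] (nilL : Loc) :
    (V → Loc) → SLHeap κ Loc nilL → SLForm κ V P → Prop
  | s, h, .pts t0 ts =>
      h.dom = {SLTerm.interp nilL s t0} ∧
      h.f (SLTerm.interp nilL s t0) = some (fun i => SLTerm.interp nilL s (ts i))
  | _, _, .pred _ _ => False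
  | s, h, .eq t1 t2 => h.dom = ∅ ∧ SLTerm.interp nilL s t1 = SLTerm.interp nilL s t2
  | s, h, .neq t1 t2 => h.dom = ∅ ∧ SLTerm.interp nilL s t1 ≠ SLTerm.interp nilL s t2
  | s, h, .star φ1 φ2 =>
      ∃ h1 h2 : SLHeap κ Loc nilL, HUnion h h1 h2 ∧ Sat nilL s h1 φ1 ∧ Sat nilL s h2 φ2
  | s, h, .ex x φ => ∃ ℓ : Loc, Sat nilL (Function.update s x ℓ) h φ

/-- The list of (occurrences of) predicate atoms of a formula, in left-to-right order. -/
def predAtoms : SLForm κ V P → List (P × List (SLTerm V))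
  | .pred p a => [(p, a)]
  | .star φ1 φ2 => predAtoms φ1 ++ predAtoms φ2
  | .ex _ φ => predAtoms φ
  | _ => []

/-- A formula is predicate-free iff no predicate atom occurs in it. -/
def PredFree (φ : SLForm κ V P) : Prop := predAtoms φ = []

/-- Replace the `k`-th occurrence (counting from `n`, left to right) of a predicate
atom by `f k`; returns the new formula together with the updated counter. -/
def replacePredsAux : SLForm κ V P → ℕ → (ℕ → SLForm κ V P) → SLForm κ V P × ℕ
  | .pred _ _, n, f => (f n, n + 1)
  | .star φ1 φ2, n, f =>
      let r1 := replacePredsAux φ1 n f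
      let r2 := replacePredsAux φ2 r1.2 f
      (.star r1.1 r2.1, r2.2)
  | .ex x φ, n, f =>
      let r := replacePredsAux φ n f
      (.ex x r.1, r.2)
  | φ, n, _ => (φ, n)

/-- Replace the `k`-th occurrence of a predicate atom of `φ` by `f k`, for every `k`. -/
def replacePreds (φ : SLForm κ V P) (f : ℕ → SLForm κ V P) : SLForm κ V P :=
  (replacePredsAux φ 0 f).1

/-- Free variables of a term. -/
def SLTerm.fv : SLTerm V → Set V
  | .var x => {x}
  | .nil => ∅

/-- Free variables of a formula. -/
def SLForm.fv : SLForm κ V P → Set V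
  | .pts t ts => t.fv ∪ {v | ∃ i, v ∈ (ts i).fv}
  | .pred _ a => {v | ∃ t ∈ a, v ∈ t.fv}
  | .eq t1 t2 => t1.fv ∪ t2.fv
  | .neq t1 t2 => t1.fv ∪ t2.fv
  | .star φ1 φ2 => φ1.fv ∪ φ2.fv
  | .ex x φ => φ.fv \ {x}

def SLTerm.subst (σ : V → SLTerm V) : SLTerm V → SLTerm V
  | .var x => σ x
  | .nil => .nil

/-- Substitution in a formula (bound variables are not substituted). -/
def SLForm.subst [DecidableEq V] (σ : V → SLTerm V) : SLForm κ V P → SLForm κ V P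
  | .pts t ts => .pts (t.subst σ) (fun i => (ts i).subst σ)
  | .pred p a => .pred p (a.map (SLTerm.subst σ))
  | .eq t1 t2 => .eq (t1.subst σ) (t2.subst σ)
  | .neq t1 t2 => .neq (t1.subst σ) (t2.subst σ)
  | .star φ1 φ2 => .star (φ1.subst σ) (φ2.subst σ)
  | .ex x φ => .ex x (φ.subst (Function.update σ x (.var x)))

/-- Finite trees: a finite nonempty prefix-closed set of finite sequences of
natural numbers, closed under taking smaller siblings, with a labeling function. -/
structure FinTree (α : Type) where
  nodes : Set (List ℕ)
  finite : nodes.Finite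
  root_mem : [] ∈ nodes
  prefix_closed : ∀ w i, w ++ [i] ∈ nodes → w ∈ nodes
  sibling_closed : ∀ w (i j : ℕ), w ++ [i] ∈ nodes → j < i → w ++ [j] ∈ nodes
  label : List ℕ → α

/-- Relabeling of a tree. -/
def FinTree.relabel {α β : Type} (t : FinTree α) (f : List ℕ → β) : FinTree β :=
  ⟨t.nodes, t.finite, t.root_mem, t.prefix_closed, t.sibling_closed, f⟩

/-- The subtree of `t` rooted at `w`. -/
def FinTree.subtree {α : Type} (t : FinTree α) (w : List ℕ) : FinTree α where
  nodes := {w' | w ++ w' ∈ t.nodes} ∪ {[]}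
  finite := by
    apply Set.Finite.union _ (Set.finite_singleton _)
    have hinj : Set.InjOn (fun w' => w ++ w') ((fun w' => w ++ w') ⁻¹' t.nodes) := by
      intro a _ b _ hab
      simpa using hab
    exact Set.Finite.subset (Set.Finite.preimage hinj t.finite) (fun _ h => h)
  root_mem := Or.inr rfl
  prefix_closed := by
    rintro w' i (h | h)
    · exact Or.inl (t.prefix_closed (w ++ w') i (by simpa [List.append_assoc] using h))
    · simp at h
  sibling_closed := by
    rintro w' i j (h | h) hj
    · have := t.sibling_closed (w ++ w') i j (by simpa [List.append_assoc] using h) hj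
      exact Or.inl (by simpa [List.append_assoc] using this)
    · simp at h
  label := fun w' => t.label (w ++ w')

/-- A set of rules assigns to each predicate a set of rule bodies. -/
abbrev RuleSet (κ : ℕ) (V P : Type) := P → Set (SLForm κ V P)

-- The substitution replacing the parameters `x_1, …, x_n` (given by the
-- injection `paramOf`) of a rule by the actual arguments `args`.
open Classical in
noncomputable def argSubst (paramOf : ℕ → V) (args : List (SLTerm V)) (v : V) : SLTerm V :=
  if h : ∃ j, j < args.length ∧ paramOf j = v then args.getD h.choose (.var v)
  else .var v

/-- `IsUnfoldingTree S paramOf a u`: `u` is an unfolding tree of the predicate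
atom `a` with respect to the set of rules `S`. Each node is labeled by a pair of
a predicate atom and a formula obtained from a rule body by instantiating the
parameters, and there is a bijection between the occurrences of predicate atoms
of that formula and the children of the node, preserving the atoms. -/
def IsUnfoldingTree [DecidableEq V] (S : RuleSet κ V P) (paramOf : ℕ → V)
    (a : P × List (SLTerm V))
    (u : FinTree ((P × List (SLTerm V)) × SLForm κ V P)) : Prop :=
  (u.label []).1 = a ∧
  ∀ w ∈ u.nodes,
    (∃ ρ ∈ S (u.label w).1.1,
        (u.label w).2 = SLForm.subst (argSubst paramOf (u.label w).1.2) ρ) ∧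
    ∃ n : ℕ, (∀ i : ℕ, w ++ [i] ∈ u.nodes ↔ i < n) ∧
      ∃ hn : (predAtoms (u.label w).2).length = n,
        ∃ σ : Fin n ≃ Fin n,
          ∀ k : Fin n,
            (u.label (w ++ [(σ k : ℕ)])).1 =
              (predAtoms (u.label w).2).get (Fin.cast hn.symm k)

/-- `CharForm u φ`: `φ` is a characteristic formula of the unfolding tree `u`,
obtained by recursively replacing each occurrence of a predicate atom in the
formula labeling the root by the characteristic formula of the subtree rooted
at the corresponding child, relative to some choice of an atom-preserving
bijection between occurrences of predicate atoms and children. -/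
inductive CharForm : FinTree ((P × List (SLTerm V)) × SLForm κ V P) → SLForm κ V P → Prop where
  | mk (u : FinTree ((P × List (SLTerm V)) × SLForm κ V P)) (n : ℕ)
      (hch : ∀ i : ℕ, [i] ∈ u.nodes ↔ i < n)
      (hn : (predAtoms (u.label []).2).length = n)
      (σ : Fin n ≃ Fin n)
      (hσ : ∀ k : Fin n,
        ((u.subtree [(σ k : ℕ)]).label []).1 =
          (predAtoms (u.label []).2).get (Fin.cast hn.symm k))
      (φs : Fin n → SLForm κ V P)
      (hrec : ∀ k : Fin n, CharForm (u.subtree [(σ k : ℕ)]) (φs k)) :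
      CharForm u (replacePreds (u.label []).2
        (fun j => if h : j < n then φs ⟨j, h⟩ else (u.label []).2))

/-- `SatS S paramOf s h φ`: the structure `(s,h)` is an `S`-model of `φ`, i.e. it
satisfies some predicate-free formula obtained from `φ` by replacing each
occurrence of a predicate atom by the characteristic formula of one of its
unfolding trees w.r.t. `S`. -/
def SatS [DecidableEq V] {nilL : Loc} (S : RuleSet κ V P) (paramOf : ℕ → V)
    (s : V → Loc) (h : SLHeap κ Loc nilL) (φ : SLForm κ V P) : Prop :=
  ∃ f : ℕ → SLForm κ V P,
    (∀ j : ℕ, ∀ hj : j < (predAtoms φ).length,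
      ∃ u, IsUnfoldingTree S paramOf ((predAtoms φ).get ⟨j, hj⟩) u ∧ CharForm u (f j)) ∧
    Sat nilL s h (replacePreds φ f)

/-- No points-to atom occurs in the formula. -/
def NoPts : SLForm κ V P → Prop
  | .pts _ _ => False
  | .star φ1 φ2 => NoPts φ1 ∧ NoPts φ2
  | .ex _ φ => NoPts φ
  | _ => True

/-- A rule body is progressing (w.r.t. the first parameter `x1`): it has the form
`∃z1…∃zm. x1 ↦ (y1,…,yκ) * ψ` where `ψ` contains no points-to atom (the
degenerate case of an empty `ψ` corresponds to a bare points-to atom). -/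
inductive ProgBody (x1 : V) : SLForm κ V P → Prop where
  | base (ts : Fin κ → SLTerm V) (ψ : SLForm κ V P) (hψ : NoPts ψ) :
      ProgBody x1 (.star (.pts (.var x1) ts) ψ)
  | base0 (ts : Fin κ → SLTerm V) : ProgBody x1 (.pts (.var x1) ts)
  | ex (z : V) (φ : SLForm κ V P) : ProgBody x1 φ → ProgBody x1 (.ex z φ)

/-- A rule body is connected: it is progressing and moreover every occurrence of a
predicate atom in `ψ` has the form `q(y_i, u_1, …, u_{#q−1})`, where `y_i` is one
of the fields of the points-to atom. -/
inductive ConnBody (x1 : V) : SLForm κ V P → Prop where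
  | base (ts : Fin κ → SLTerm V) (ψ : SLForm κ V P) (hψ : NoPts ψ)
      (hc : ∀ pa ∈ predAtoms ψ, ∃ i : Fin κ, pa.2.head? = some (ts i)) :
      ConnBody x1 (.star (.pts (.var x1) ts) ψ)
  | base0 (ts : Fin κ → SLTerm V) : ConnBody x1 (.pts (.var x1) ts)
  | ex (z : V) (φ : SLForm κ V P) : ConnBody x1 φ → ConnBody x1 (.ex z φ)

/-- The list of existentially quantified variables in the prefix of a formula. -/
def exPrefix : SLForm κ V P → List V
  | .ex z φ => z :: exPrefix φ
  | _ => []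

/-- The matrix of a formula (after stripping the existential prefix). -/
def matrix : SLForm κ V P → SLForm κ V P
  | .ex _ φ => matrix φ
  | φ => φ

/-- A set of rules is established: for each rule `p(x⃗) ⇐ ∃z1…∃zm.ψ` and every
`S`-model `(s,h)` of `ψ`, the locations `s(z1),…,s(zm)` are all allocated. -/
def Established [DecidableEq V] (nilL : Loc) (S : RuleSet κ V P) (paramOf : ℕ → V) : Prop :=
  ∀ p ρ, ρ ∈ S p → ∀ (s : V → Loc) (h : SLHeap κ Loc nilL),
    SatS S paramOf s h (matrix ρ) → ∀ z ∈ exPrefix ρ, s z ∈ h.dom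

end SLPaper

open SLPaper

namespace SLPaper

/-- The global variables `0`, `1`, `γ1, …, γN`. -/
inductive GVar (N : ℕ) where
  | vzero : GVar N
  | vone : GVar N
  | gam : Fin N → GVar N
deriving DecidableEq

namespace Stmt11

variable {N : ℕ} {P : Type}

/-- The variables used in the rules: ordinary (numbered) variables, among which
the parameters of the rules, together with the free global variables. -/
abbrev V (N : ℕ) := ℕ ⊕ GVar N

/-- Terms for the global variables. -/
def gv (g : GVar N) : SLTerm (V N) := SLTerm.var (Sum.inr g)

/-- The tuple `(0, 1, γ1, …, γN)`. -/
def tupleTerms (N : ℕ) : List (SLTerm (V N)) :=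
  gv GVar.vzero :: gv GVar.vone :: (List.finRange N).map (fun k => gv (GVar.gam k))

/-- The body of one rule of the right-nested binary encoding of
`x ↦ (t1,…,tn) * a(t1) * … * a(tn)`: the allocated variable is the parameter
`inl 0`, the auxiliary chain location is the fresh existential `inl freshIdx`,
and the remaining parameters `xargs` are passed to the next chain predicate. -/
def chainBody (aP : P) (next : P) (xargs : List (SLTerm (V N))) (freshIdx : ℕ) :
    List (SLTerm (V N)) → SLForm 2 (V N) P
  | [t1, t2] =>
      .star (.pts (.var (.inl 0)) ![t1, t2])
        (.star (.pred aP [t1]) (.pred aP [t2]))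
  | t :: rest =>
      .ex (.inl freshIdx)
        (.star (.pts (.var (.inl 0)) ![t, .var (.inl freshIdx)])
          (.star (.pred aP [t])
            (.pred next (.var (.inl freshIdx) :: xargs))))
  | _ => .pts (.var (.inl 0)) ![.nil, .nil]

end Stmt11

end SLPaper

open SLPaper.Stmt11

namespace SLPaper
namespace Stmt11Proof

variable {κ N : ℕ} {P Loc : Type} {nilL : Loc}

lemma hunion_dom_left {h h1 h2 : SLHeap κ Loc nilL} (hu : HUnion h h1 h2) :
    h1.dom ⊆ h.dom := by
  intro l hl
  simp only [SLHeap.dom, Set.mem_setOf_eq] at hl ⊢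
  rw [hu.2 l]
  cases hh : h1.f l with
  | none => exact absurd hh hl
  | some v => simp [Option.orElse]

lemma hunion_dom_right {h h1 h2 : SLHeap κ Loc nilL} (hu : HUnion h h1 h2) :
    h2.dom ⊆ h.dom := by
  intro l hl
  simp only [SLHeap.dom, Set.mem_setOf_eq] at hl ⊢
  rw [hu.2 l]
  cases hh : h1.f l with
  | none => simpa [Option.orElse] using hl
  | some v => simp [Option.orElse]

lemma hunion_disj {h h1 h2 : SLHeap κ Loc nilL} (hu : HUnion h h1 h2)
    {l : Loc} (h1l : l ∈ h1.dom) (h2l : l ∈ h2.dom) : False := by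
  have : l ∈ h1.dom ∩ h2.dom := ⟨h1l, h2l⟩
  rw [hu.1] at this
  exact this

lemma argSubst_inr (args : List (SLTerm (Stmt11.V N))) (g : GVar N) :
    argSubst Sum.inl args (Sum.inr g) = .var (Sum.inr g) := by
  rw [argSubst, dif_neg]
  rintro ⟨j, -, hj⟩
  exact absurd hj (by simp)

lemma argSubst_inl_zero (t : SLTerm (Stmt11.V N)) (rest : List (SLTerm (Stmt11.V N))) :
    argSubst Sum.inl (t :: rest) (Sum.inl 0) = t := by
  have hex : ∃ j, j < (t :: rest).length ∧ (Sum.inl j : Stmt11.V N) = Sum.inl 0 :=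
    ⟨0, by simp, rfl⟩
  rw [argSubst, dif_pos hex]
  have hspec := hex.choose_spec
  have h0 : hex.choose = 0 := by
    have := hspec.2
    simpa using this
  rw [h0]
  rfl

lemma subtree_nodes_mem {α : Type} (t : FinTree α) (w : List ℕ) (hw : w ∈ t.nodes)
    (w' : List ℕ) : w' ∈ (t.subtree w).nodes ↔ w ++ w' ∈ t.nodes := by
  constructor
  · rintro (h | h)
    · exact h
    · simp only [Set.mem_singleton_iff] at h; subst h; simpa using hw
  · intro h; exact Or.inl h

lemma isUnfoldingTree_subtree {V P : Type} [DecidableEq V] {S : RuleSet κ V P}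
    {paramOf : ℕ → V} {a : P × List (SLTerm V)}
    {u : FinTree ((P × List (SLTerm V)) × SLForm κ V P)}
    (hu : IsUnfoldingTree S paramOf a u) {i : ℕ} (hi : [i] ∈ u.nodes) :
    IsUnfoldingTree S paramOf ((u.subtree [i]).label []).1 (u.subtree [i]) := by
  refine ⟨rfl, ?_⟩
  intro w hw
  have hw' : [i] ++ w ∈ u.nodes := (subtree_nodes_mem u [i] hi w).1 hw
  obtain ⟨hrule, n, hch, hn, σ, hσ⟩ := hu.2 ([i] ++ w) hw'
  refine ⟨hrule, n, ?_, hn, σ, fun k => hσ k⟩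
  intro j
  rw [subtree_nodes_mem u [i] hi (w ++ [j])]
  exact hch j

lemma predAtoms_pts (t0 : SLTerm (Stmt11.V N)) (ts : Fin κ → SLTerm (Stmt11.V N)) :
    predAtoms (P := P) (.pts t0 ts) = [] := rfl

lemma replacePreds_pts (t0 : SLTerm (Stmt11.V N)) (ts : Fin κ → SLTerm (Stmt11.V N))
    (f : ℕ → SLForm κ (Stmt11.V N) P) :
    replacePreds (.pts t0 ts) f = .pts t0 ts := rfl

lemma replacePreds_base (a : SLTerm (Stmt11.V N)) (b : Fin κ → SLTerm (Stmt11.V N))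
    (p1 p2 : P) (l1 l2 : List (SLTerm (Stmt11.V N))) (f : ℕ → SLForm κ (Stmt11.V N) P) :
    replacePreds (.star (.pts a b) (.star (.pred p1 l1) (.pred p2 l2))) f
      = .star (.pts a b) (.star (f 0) (f 1)) := rfl

lemma replacePreds_exshape (z : Stmt11.V N) (a : SLTerm (Stmt11.V N))
    (b : Fin κ → SLTerm (Stmt11.V N))
    (p1 p2 : P) (l1 l2 : List (SLTerm (Stmt11.V N))) (f : ℕ → SLForm κ (Stmt11.V N) P) :
    replacePreds (.ex z (.star (.pts a b) (.star (.pred p1 l1) (.pred p2 l2)))) f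
      = .ex z (.star (.pts a b) (.star (f 0) (f 1))) := rfl

lemma predAtoms_pred (p : P) (a : List (SLTerm (Stmt11.V N))) :
    predAtoms (κ := κ) (.pred p a) = [(p, a)] := rfl

lemma predAtoms_star (φ1 φ2 : SLForm κ (Stmt11.V N) P) :
    predAtoms (.star φ1 φ2) = predAtoms φ1 ++ predAtoms φ2 := rfl

lemma predAtoms_ex (z : Stmt11.V N) (φ : SLForm κ (Stmt11.V N) P) :
    predAtoms (.ex z φ) = predAtoms φ := rfl

lemma update_argSubst_inr (args : List (SLTerm (Stmt11.V N))) (m : ℕ)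
    (t : SLTerm (Stmt11.V N)) (g : GVar N) :
    Function.update (argSubst Sum.inl args) (Sum.inl m) t (Sum.inr g)
      = .var (Sum.inr g) := by
  rw [Function.update_of_ne (by simp)]
  exact argSubst_inr args g

lemma get_pair_cast {α : Type*} {l : List α} {A B : α} (hl : l = [A, B]) {n : ℕ}
    (hn : l.length = n) (i : ℕ) (hi : i < n) (hi2 : i < 2) :
    l.get (Fin.cast hn.symm ⟨i, hi⟩) = [A, B].get ⟨i, hi2⟩ := by
  subst hl; rfl

lemma tupleTerms_length : (Stmt11.tupleTerms N).length = N + 2 := by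
  simp [Stmt11.tupleTerms]

lemma tupleTerms_mem {t : SLTerm (Stmt11.V N)} (ht : t ∈ Stmt11.tupleTerms N) :
    ∃ g, t = .var (Sum.inr g) := by
  simp only [Stmt11.tupleTerms, Stmt11.gv, List.mem_cons, List.mem_map] at ht
  rcases ht with rfl | rfl | ⟨k, -, rfl⟩
  exacts [⟨_, rfl⟩, ⟨_, rfl⟩, ⟨_, rfl⟩]

lemma keyA {aP : P} {S : RuleSet 2 (Stmt11.V N) P}
    (hS_a : S aP = {SLForm.pts (.var (.inl 0)) ![.nil, .nil]}) :
    ∀ {u : FinTree ((P × List (SLTerm (Stmt11.V N))) × SLForm 2 (Stmt11.V N) P)}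
      {φ : SLForm 2 (Stmt11.V N) P}, CharForm u φ →
    ∀ t : SLTerm (Stmt11.V N), IsUnfoldingTree S Sum.inl (aP, [t]) u →
    ∀ (s' : Stmt11.V N → Loc) (h' : SLHeap 2 Loc nilL), Sat nilL s' h' φ →
      h'.dom = {SLTerm.interp nilL s' t} := by
  intro u φ hcf t hu s' h' hs
  cases hcf with
  | mk u n hch hn σ hσ φs hrec =>
    obtain ⟨⟨ρ, hρ, hbody⟩, -⟩ := hu.2 [] u.root_mem
    have e1 : (u.label []).1.1 = aP := by rw [hu.1]
    have e2 : (u.label []).1.2 = [t] := by rw [hu.1]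
    rw [e1, hS_a, Set.mem_singleton_iff] at hρ
    subst hρ
    rw [e2] at hbody
    have hbody' : (u.label []).2
        = SLForm.pts t
            (fun i => SLTerm.subst (argSubst Sum.inl [t]) (![SLTerm.nil, SLTerm.nil] i)) := by
      rw [hbody]
      simp only [SLForm.subst, SLTerm.subst, argSubst_inl_zero]
    rw [hbody', replacePreds_pts] at hs
    simp only [Sat] at hs
    exact hs.1

lemma key {constP aP : P} {auxP : ℕ → P} {S : RuleSet 2 (Stmt11.V N) P}
    (hS_a : S aP = {SLForm.pts (.var (.inl 0)) ![.nil, .nil]})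
    (hS_const : S constP
      = {Stmt11.chainBody aP (auxP 1) [SLTerm.var (Sum.inl 0)] 1 (Stmt11.tupleTerms N)})
    (hS_aux : ∀ k, 1 ≤ k → k ≤ N → S (auxP k) =
      {Stmt11.chainBody aP (auxP (k + 1)) [SLTerm.var (Sum.inl 1)] 2
        ((Stmt11.tupleTerms N).drop k)})
    (s : Stmt11.V N → Loc) :
    ∀ {u : FinTree ((P × List (SLTerm (Stmt11.V N))) × SLForm 2 (Stmt11.V N) P)}
      {φ : SLForm 2 (Stmt11.V N) P}, CharForm u φ →
    ∀ k, k ≤ N → ∀ (p : P) (args : List (SLTerm (Stmt11.V N))),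
      ((p = constP ∧ k = 0) ∨ (p = auxP k ∧ 1 ≤ k)) →
      IsUnfoldingTree S Sum.inl (p, args) u →
      ∀ s' : Stmt11.V N → Loc, (∀ g, s' (Sum.inr g) = s (Sum.inr g)) →
      ∀ h' : SLHeap 2 Loc nilL, Sat nilL s' h' φ →
      (((Stmt11.tupleTerms N).drop k).map (fun t => SLTerm.interp nilL s t)).Pairwise (· ≠ ·)
        ∧ ∀ t ∈ (Stmt11.tupleTerms N).drop k, SLTerm.interp nilL s t ∈ h'.dom := by
  intro u φ hcf
  induction hcf with
  | mk u n hch hn σ hσ φs hrec IH =>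
  intro k hk p args hp hu s' hg h' hs
  obtain ⟨xa, fr, hSp⟩ : ∃ xa fr, S p
      = {Stmt11.chainBody aP (auxP (k + 1)) xa fr ((Stmt11.tupleTerms N).drop k)} := by
    rcases hp with ⟨rfl, rfl⟩ | ⟨rfl, hk1⟩
    · exact ⟨[SLTerm.var (Sum.inl 0)], 1, by simpa using hS_const⟩
    · exact ⟨_, _, hS_aux k hk1 hk⟩
  obtain ⟨⟨ρ, hρ, hbody⟩, -⟩ := hu.2 [] u.root_mem
  have e1 : (u.label []).1.1 = p := by rw [hu.1]
  have e2 : (u.label []).1.2 = args := by rw [hu.1]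
  rw [e1, hSp, Set.mem_singleton_iff] at hρ
  subst hρ
  rw [e2] at hbody
  have hlen := tupleTerms_length (N := N)
  rcases eq_or_lt_of_le hk with rfl | hkN
  · -- base case : k = k, the tail of the tuple has exactly two entries
    have hlen2 : ((Stmt11.tupleTerms k).drop k).length = 2 := by
      simp [tupleTerms_length]
    obtain ⟨a, b, hab⟩ := List.length_eq_two.mp hlen2
    obtain ⟨gA, rfl⟩ := tupleTerms_mem (List.drop_subset _ _ (by rw [hab]; simp) :
      a ∈ Stmt11.tupleTerms k)
    obtain ⟨gB, rfl⟩ := tupleTerms_mem (List.drop_subset _ _ (by rw [hab]; simp) :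
      b ∈ Stmt11.tupleTerms k)
    rw [hab] at hbody
    have hcb : Stmt11.chainBody aP (auxP (k + 1)) xa fr
        [SLTerm.var (Sum.inr gA), SLTerm.var (Sum.inr gB)]
        = .star (.pts (.var (.inl 0)) ![.var (.inr gA), .var (.inr gB)])
            (.star (.pred aP [.var (.inr gA)]) (.pred aP [.var (.inr gB)])) := rfl
    rw [hcb] at hbody
    have hsubst : (u.label []).2 = .star
        (.pts (argSubst Sum.inl args (Sum.inl 0))
          (fun i => SLTerm.subst (argSubst Sum.inl args)
            ((![SLTerm.var (Sum.inr gA), SLTerm.var (Sum.inr gB)] : Fin 2 → _) i)))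
        (.star (.pred aP [.var (.inr gA)]) (.pred aP [.var (.inr gB)])) := by
      rw [hbody]
      simp only [SLForm.subst, SLTerm.subst, List.map, argSubst_inr]
    have hl : predAtoms (u.label []).2
        = [(aP, [SLTerm.var (Sum.inr gA)]), (aP, [SLTerm.var (Sum.inr gB)])] := by
      rw [hsubst]; rfl
    have hn2 : n = 2 := by
      have := hn; rw [hl] at this; simpa using this.symm
    subst hn2
    rw [hsubst, replacePreds_base] at hs
    rw [dif_pos (by omega : (0:ℕ) < 2), dif_pos (by omega : (1:ℕ) < 2)] at hs
    simp only [Sat] at hs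
    obtain ⟨h1, h23, hun1, -, h2, h3, hun2, hsa, hsb⟩ := hs
    -- the two children
    have hm0 : [((σ ⟨0, by omega⟩ : Fin 2) : ℕ)] ∈ u.nodes := (hch _).2 (σ _).isLt
    have hm1 : [((σ ⟨1, by omega⟩ : Fin 2) : ℕ)] ∈ u.nodes := (hch _).2 (σ _).isLt
    have hu0 := isUnfoldingTree_subtree hu hm0
    have hu1 := isUnfoldingTree_subtree hu hm1
    have hatom0 : ((u.subtree [((σ ⟨0, by omega⟩ : Fin 2) : ℕ)]).label []).1
        = (aP, [SLTerm.var (Sum.inr gA)]) := by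
      rw [hσ ⟨0, by omega⟩, get_pair_cast hl hn 0 (by omega) (by omega)]; rfl
    have hatom1 : ((u.subtree [((σ ⟨1, by omega⟩ : Fin 2) : ℕ)]).label []).1
        = (aP, [SLTerm.var (Sum.inr gB)]) := by
      rw [hσ ⟨1, by omega⟩, get_pair_cast hl hn 1 (by omega) (by omega)]; rfl
    rw [hatom0] at hu0
    rw [hatom1] at hu1
    have hdom2 : h2.dom = {s (Sum.inr gA)} := by
      rw [keyA hS_a (hrec ⟨0, by omega⟩) _ hu0 _ h2 hsa]
      simp [SLTerm.interp, hg]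
    have hdom3 : h3.dom = {s (Sum.inr gB)} := by
      rw [keyA hS_a (hrec ⟨1, by omega⟩) _ hu1 _ h3 hsb]
      simp [SLTerm.interp, hg]
    have hABne : s (Sum.inr gA) ≠ s (Sum.inr gB) := by
      intro hAB
      refine hunion_disj hun2 (l := s (Sum.inr gA)) ?_ ?_
      · rw [hdom2]; rfl
      · rw [hdom3, hAB]; rfl
    constructor
    · rw [hab]
      simp only [List.map, List.pairwise_cons, List.mem_singleton, List.mem_cons,
        List.not_mem_nil]
      refine ⟨?_, by simp⟩
      intro a' ha'
      simp only [List.mem_cons, List.not_mem_nil, or_false] at ha'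
      subst ha'
      exact hABne
    · intro t ht
      rw [hab] at ht
      simp only [List.mem_cons, List.not_mem_nil, or_false] at ht
      rcases ht with rfl | rfl
      · refine hunion_dom_right hun1 (hunion_dom_left hun2 ?_)
        rw [hdom2]; rfl
      · refine hunion_dom_right hun1 (hunion_dom_right hun2 ?_)
        rw [hdom3]; rfl
  · -- inductive case : k < k
    have hk2 : k + 2 < (Stmt11.tupleTerms N).length := by omega
    have e3 : (Stmt11.tupleTerms N).drop k
        = (Stmt11.tupleTerms N)[k] :: (Stmt11.tupleTerms N).drop (k + 1) :=
      List.drop_eq_getElem_cons (by omega)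
    have e4 : (Stmt11.tupleTerms N).drop (k + 1)
        = (Stmt11.tupleTerms N)[k + 1] :: (Stmt11.tupleTerms N).drop (k + 2) :=
      List.drop_eq_getElem_cons (by omega)
    have e5 : (Stmt11.tupleTerms N).drop (k + 2)
        = (Stmt11.tupleTerms N)[k + 2] :: (Stmt11.tupleTerms N).drop (k + 3) :=
      List.drop_eq_getElem_cons (by omega)
    obtain ⟨g, hgv⟩ := tupleTerms_mem (List.getElem_mem (l := Stmt11.tupleTerms N)
      (n := k) (by omega))
    have hdrop : (Stmt11.tupleTerms N).drop k
        = SLTerm.var (Sum.inr g) :: (Stmt11.tupleTerms N)[k + 1]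
            :: (Stmt11.tupleTerms N)[k + 2] :: (Stmt11.tupleTerms N).drop (k + 3) := by
      rw [e3, e4, e5, hgv]
    rw [hdrop] at hbody
    set σ1 : Stmt11.V N → SLTerm (Stmt11.V N) :=
      Function.update (argSubst Sum.inl args) (Sum.inl fr) (.var (.inl fr)) with hσ1
    have hcb : Stmt11.chainBody aP (auxP (k + 1)) xa fr
        (SLTerm.var (Sum.inr g) :: (Stmt11.tupleTerms N)[k + 1]
          :: (Stmt11.tupleTerms N)[k + 2] :: (Stmt11.tupleTerms N).drop (k + 3))
        = .ex (.inl fr)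
            (.star (.pts (.var (.inl 0)) ![.var (.inr g), .var (.inl fr)])
              (.star (.pred aP [.var (.inr g)])
                (.pred (auxP (k + 1)) (.var (.inl fr) :: xa)))) := rfl
    rw [hcb] at hbody
    have hsubst : (u.label []).2 = .ex (.inl fr)
        (.star (.pts (σ1 (Sum.inl 0))
            (fun i => SLTerm.subst σ1
              ((![SLTerm.var (Sum.inr g), SLTerm.var (Sum.inl fr)] : Fin 2 → _) i)))
          (.star (.pred aP [.var (.inr g)])
            (.pred (auxP (k + 1)) (List.map (SLTerm.subst σ1) (.var (.inl fr) :: xa))))) := by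
      rw [hbody]
      simp only [SLForm.subst, SLTerm.subst, List.map, hσ1, update_argSubst_inr]
    have hl : predAtoms (u.label []).2
        = [(aP, [SLTerm.var (Sum.inr g)]),
            (auxP (k + 1), List.map (SLTerm.subst σ1) (.var (.inl fr) :: xa))] := by
      rw [hsubst]; rfl
    have hn2 : n = 2 := by
      have := hn; rw [hl] at this; simpa using this.symm
    subst hn2
    rw [hsubst, replacePreds_exshape] at hs
    rw [dif_pos (by omega : (0:ℕ) < 2), dif_pos (by omega : (1:ℕ) < 2)] at hs
    simp only [Sat] at hs
    obtain ⟨ℓ, h1, h23, hun1, -, h2, h3, hun2, hsa, hsnext⟩ := hs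
    set s'' : Stmt11.V N → Loc := Function.update s' (Sum.inl fr) ℓ with hs''
    have hg'' : ∀ g', s'' (Sum.inr g') = s (Sum.inr g') := fun g' => by
      rw [hs'', Function.update_of_ne (by simp)]; exact hg g'
    -- the two children
    have hm0 : [((σ ⟨0, by omega⟩ : Fin 2) : ℕ)] ∈ u.nodes := (hch _).2 (σ _).isLt
    have hm1 : [((σ ⟨1, by omega⟩ : Fin 2) : ℕ)] ∈ u.nodes := (hch _).2 (σ _).isLt
    have hu0 := isUnfoldingTree_subtree hu hm0
    have hu1 := isUnfoldingTree_subtree hu hm1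
    have hatom0 : ((u.subtree [((σ ⟨0, by omega⟩ : Fin 2) : ℕ)]).label []).1
        = (aP, [SLTerm.var (Sum.inr g)]) := by
      rw [hσ ⟨0, by omega⟩, get_pair_cast hl hn 0 (by omega) (by omega)]; rfl
    have hatom1 : ((u.subtree [((σ ⟨1, by omega⟩ : Fin 2) : ℕ)]).label []).1
        = (auxP (k + 1), List.map (SLTerm.subst σ1) (.var (.inl fr) :: xa)) := by
      rw [hσ ⟨1, by omega⟩, get_pair_cast hl hn 1 (by omega) (by omega)]; rfl
    rw [hatom0] at hu0
    rw [hatom1] at hu1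
    have hdom2 : h2.dom = {s (Sum.inr g)} := by
      rw [keyA hS_a (hrec ⟨0, by omega⟩) _ hu0 _ h2 hsa]
      simp [SLTerm.interp, hg'']
    have hIH := IH ⟨1, by omega⟩ (k + 1) (by omega) (auxP (k + 1)) _
      (Or.inr ⟨rfl, by omega⟩) hu1 s'' hg'' h3 hsnext
    constructor
    · rw [e3, hgv]
      simp only [List.map, List.pairwise_cons]
      constructor
      · intro a' ha'
        simp only [List.mem_map] at ha'
        obtain ⟨t, ht, rfl⟩ := ha'
        intro hEq
        refine hunion_disj hun2 (l := SLTerm.interp nilL s (.var (Sum.inr g))) ?_ ?_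
        · rw [hdom2]; rfl
        · rw [hEq]; exact hIH.2 t ht
      · exact hIH.1
    · intro t ht
      rw [e3, hgv] at ht
      rcases (List.mem_cons.mp ht) with rfl | ht'
      · refine hunion_dom_right hun1 (hunion_dom_left hun2 ?_)
        rw [hdom2]; rfl
      · exact hunion_dom_right hun1 (hunion_dom_right hun2 (hIH.2 t ht'))

end Stmt11Proof
end SLPaper

/-- Let `S` be a set of `SL_2` rules containing the rules
`Const(x) ⇐ x ↦ (0,1,γ1,…,γN) * a(0) * a(1) * a(γ1) * … * a(γN)` and
`a(x) ⇐ x ↦ (nil,nil)`, with the `(N+2)`-tuple encoded as a right-nested binary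
record (via the auxiliary chain predicates `auxP 1, …, auxP N`), where
`0,1,γ1,…,γN` are free (global) variables. Then in every structure `(s,h)` with
`(s,h) ⊨_S Const(x)`, the locations `s(0), s(1), s(γ1), …, s(γN)` are pairwise
distinct and all belong to `dom(h)`; in particular the restriction of `s` to the
global variables is injective. -/
theorem stmt11 (N : ℕ) (P : Type) [Countable P] [Infinite P]
    (Loc : Type) [Countable Loc] [Infinite Loc] (nilL : Loc)
    (constP aP : P) (auxP : ℕ → P)
    -- the predicate names are pairwise distinct
    (hne1 : constP ≠ aP) (hne2 : ∀ k, auxP k ≠ constP) (hne3 : ∀ k, auxP k ≠ aP)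
    (hinj : Function.Injective auxP)
    (S : SLPaper.RuleSet 2 (V N) P)
    -- the rule for `a`
    (hS_a : S aP = {SLPaper.SLForm.pts (.var (.inl 0)) ![.nil, .nil]})
    -- the rule for `Const` (first cell of the chain)
    (hS_const : S constP = {chainBody aP (auxP 1) [SLPaper.SLTerm.var (Sum.inl 0)] 1 (tupleTerms N)})
    -- the rules for the auxiliary chain predicates
    (hS_aux : ∀ k, 1 ≤ k → k ≤ N →
      S (auxP k) =
        {chainBody aP (auxP (k + 1)) [SLPaper.SLTerm.var (Sum.inl 1)] 2 ((tupleTerms N).drop k)})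
    (x : ℕ) (s : V N → Loc) (h : SLPaper.SLHeap 2 Loc nilL)
    (hsat : SLPaper.SatS S Sum.inl s h
      (SLPaper.SLForm.pred constP [SLPaper.SLTerm.var (Sum.inl x)])) :
    (∀ g g' : SLPaper.GVar N, s (Sum.inr g) = s (Sum.inr g') → g = g') ∧
    (∀ g : SLPaper.GVar N, s (Sum.inr g) ∈ h.dom) := by
  classical
  open SLPaper.Stmt11Proof in
  obtain ⟨f, hf, hsat'⟩ := hsat
  have hrp : SLPaper.replacePreds
      (SLPaper.SLForm.pred constP [SLPaper.SLTerm.var (Sum.inl x)]) f = f 0 := rfl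
  rw [hrp] at hsat'
  obtain ⟨u, hu, hcf⟩ := hf 0 (by simp [SLPaper.predAtoms])
  have hu' : SLPaper.IsUnfoldingTree S Sum.inl
      (constP, [SLPaper.SLTerm.var (Sum.inl x)]) u := hu
  have hkey := key hS_a hS_const hS_aux s hcf 0 (Nat.zero_le N) constP _
    (Or.inl ⟨rfl, rfl⟩) hu' s (fun g => rfl) h hsat'
  rw [List.drop_zero] at hkey
  obtain ⟨hpair, hmem⟩ := hkey
  have hmemg : ∀ g : SLPaper.GVar N,
      SLPaper.SLTerm.var (Sum.inr g) ∈ tupleTerms N := by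
    intro g
    cases g with
    | vzero => simp [tupleTerms, gv]
    | vone => simp [tupleTerms, gv]
    | gam i =>
      simp only [tupleTerms, gv, List.mem_cons, List.mem_map]
      exact Or.inr (Or.inr ⟨i, List.mem_finRange i, rfl⟩)
  constructor
  · intro g g' hgg
    set glist : List (SLPaper.GVar N) :=
      SLPaper.GVar.vzero :: SLPaper.GVar.vone :: (List.finRange N).map SLPaper.GVar.gam
      with hglist
    have hmapeq : (tupleTerms N).map
        (fun t => SLPaper.SLTerm.interp nilL s t)
        = glist.map (fun g => s (Sum.inr g)) := by
      simp [tupleTerms, gv, hglist, List.map_map, Function.comp, SLPaper.SLTerm.interp]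
    have hnodup : (glist.map (fun g => s (Sum.inr g))).Nodup := by
      rw [← hmapeq]; exact hpair
    have hginl : ∀ g : SLPaper.GVar N, g ∈ glist := by
      intro g
      cases g with
      | vzero => simp [hglist]
      | vone => simp [hglist]
      | gam i =>
        simp only [hglist, List.mem_cons, List.mem_map]
        exact Or.inr (Or.inr ⟨i, List.mem_finRange i, rfl⟩)
    exact List.inj_on_of_nodup_map hnodup (hginl g) (hginl g') hgg
  · intro g
    exact hmem _ (hmemg g)
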